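/- arXiv:1004.2575 — 5 statements merged into one kernel-verified Lean document; each statement's English description precedes it below -/
import Mathlib

section
/- For a nonzero lattice vector z = (r,d) with r > 2, there exists a lattice point x in the open vertical strip {(a,b) : 0 < a < r} lying on the rational line L' parallel to the line L through (0,0) and z, where L' is the closest such parallel rational line strictly above L. -/
/-!
By Bézout some lattice point `x` has `r * x₂ - d * x₁ = g := gcd(r, d)`. Translating `x` by
multiples of the primitive vector `z / g = (r / g, d / g)` keeps this value, so `x₁` can be moved
into `(0, r / g] ⊆ (0, r]`. The endpoint `x₁ = r` is impossible: it would force `r ∣ g`, hence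
`g = r`, and then `x₁ ≤ r / g = 1 < r`.
-/

theorem exists_mul_sub_mul_eq_gcd (r d : ℤ) : ∃ x : ℤ × ℤ, r * x.2 - d * x.1 = Int.gcd r d :=
  ⟨(-Int.gcdB r d, Int.gcdA r d), by rw [Int.gcd_eq_gcd_ab]; ring⟩

theorem mul_sub_mul_add_smul_primitive (r d a b k : ℤ) :
    r * (b + k * (d / Int.gcd r d)) - d * (a + k * (r / Int.gcd r d)) = r * b - d * a := by
  have h : r * (d / Int.gcd r d) = d * (r / Int.gcd r d) := by
    rw [← Int.mul_ediv_assoc _ (Int.gcd_dvd_right r d),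
      ← Int.mul_ediv_assoc _ (Int.gcd_dvd_left r d), mul_comm]
  linear_combination k * h

theorem exists_mul_sub_mul_eq_gcd_of_pos {r : ℤ} (hr : 0 < r) (d : ℤ) :
    ∃ x : ℤ × ℤ, 0 < x.1 ∧ x.1 ≤ r / Int.gcd r d ∧ r * x.2 - d * x.1 = Int.gcd r d := by
  set m := r / Int.gcd r d
  have hm : 0 < m := Int.ediv_pos_of_pos_of_dvd hr (Int.natCast_nonneg _) (Int.gcd_dvd_left r d)
  obtain ⟨⟨a, b⟩, hab⟩ := exists_mul_sub_mul_eq_gcd r d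
  set k := -((a - 1) / m)
  have hshift : a + k * m = (a - 1) % m + 1 := by rw [Int.emod_def]; ring
  refine ⟨(a + k * m, b + k * (d / Int.gcd r d)), ?_, ?_, ?_⟩
  · have := Int.emod_nonneg (a - 1) hm.ne'
    simp only [hshift]
    omega
  · have := Int.emod_lt_of_pos (a - 1) hm
    simp only [hshift]
    omega
  · rw [mul_sub_mul_add_smul_primitive]
    exact hab

theorem fst_lt_of_mul_sub_mul_eq_gcd {r d : ℤ} {x : ℤ × ℤ} (hr : 1 < r)
    (hx : r * x.2 - d * x.1 = Int.gcd r d) (hle : x.1 ≤ r / Int.gcd r d) : x.1 < r := by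
  refine lt_of_le_of_ne (hle.trans (Int.ediv_le_self _ (by omega))) fun h => ?_
  have hdvd : r ∣ Int.gcd r d := ⟨x.2 - d, by rw [← hx, h]; ring⟩
  have hg : (Int.gcd r d : ℤ) = r :=
    Int.dvd_antisymm (Int.natCast_nonneg _) (by omega) (Int.gcd_dvd_left r d) hdvd
  rw [hg, Int.ediv_self (by omega)] at hle
  omega

/-- A lattice point `x` lies on the rational line `L'` iff `r * x₂ - d * x₁ = gcd(r, d)`,
the least positive value of `r * x₂ - d * x₁`. -/
theorem exists_minimal_path (r d : ℤ) (hr : 2 < r) :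
    ∃ x : ℤ × ℤ, 0 < x.1 ∧ x.1 < r ∧ r * x.2 - d * x.1 = Int.gcd r d := by
  obtain ⟨x, hpos, hle, hx⟩ := exists_mul_sub_mul_eq_gcd_of_pos (by omega : 0 < r) d
  exact ⟨x, hpos, fst_lt_of_mul_sub_mul_eq_gcd (by omega) hx hle, hx⟩
end

section
/- Let z be a nonzero vector in Z^2 with positive first coordinate and let x be a lattice point with 0 < x_1 < z_1 lying strictly above the line through 0 and z. Then (x, z-x) is a minimal path of weight z (i.e., x lies on the closest rational line parallel to and above the line through 0 and z) if and only if gcd(x_1,x_2) = gcd(z_1-x_1, z_2-x_2) = 1 and the triangle with vertices (0,0), x, z contains no lattice point in its interior. -/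
/-- The determinant `det(a,b) = a₁b₂ - a₂b₁`. -/
def detZ (a b : ℤ × ℤ) : ℤ := a.1 * b.2 - a.2 * b.1

/-- The embedding of the lattice `ℤ²` into `ℝ²`. -/
def toR (p : ℤ × ℤ) : ℝ × ℝ := ((p.1 : ℝ), (p.2 : ℝ))

/-
The lattice points `p` with `detZ z p = gcd z` form the line `L'`; stepping along it by
`z / gcd z` changes `detZ p x` by `n = detZ z x / gcd z`. In the coordinates
`u = detZ z p`, `v = detZ p x` the open triangle is `u > 0, v > 0, u + v < detZ z x`.

If `detZ z x = gcd z`, then `gcd z * gcd x` and `gcd z * gcd (z - x)` divide `gcd z`, and an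
interior lattice point would have `0 < u < gcd z` although `gcd z ∣ u`.

Conversely, if `gcd z < detZ z x`, pick `p ∈ L'` with `v` in the window
`(detZ z x - gcd z - n, detZ z x - gcd z]`. For a primitive `y`, a lattice point on the line
through `0` and `y` is a multiple of `y`; applied to `y = x` and `y = z - x` this shows that no
point of `L'` lies on the two other sides, which excludes `v = 0` and the right end of the window.
Since `(gcd z - 1) (n - 1) ≥ 0` the window starts at `v ≥ 0`, so `p` is interior.
-/

noncomputable def detR (a b : ℝ × ℝ) : ℝ := a.1 * b.2 - a.2 * b.1

theorem detR_toR (p q : ℤ × ℤ) : detR (toR p) (toR q) = detZ p q := by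
  simp only [detR, toR, detZ]
  push_cast
  ring

section Triangle

variable {X Z : ℝ × ℝ}

/-- Barycentric coordinates with respect to `0, X, Z`, by Cramer's rule. -/
noncomputable def triangleWeights (X Z q : ℝ × ℝ) : Fin 3 → ℝ :=
  ![1 - (detR Z q + detR q X) / detR Z X, detR Z q / detR Z X, detR q X / detR Z X]

theorem sum_triangleWeights (X Z q : ℝ × ℝ) : ∑ i, triangleWeights X Z q i = 1 := by
  simp only [triangleWeights, Fin.sum_univ_three, Matrix.cons_val_zero, Matrix.cons_val_one,
    Matrix.cons_val]
  ring

theorem affineCombination_triangleWeights (h : detR Z X ≠ 0) (q : ℝ × ℝ) :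
    Finset.univ.affineCombination ℝ ![0, X, Z] (triangleWeights X Z q) = q := by
  rw [Finset.affineCombination_eq_linear_combination _ _ _ (sum_triangleWeights X Z q)]
  simp only [detR] at h
  ext <;>
  simp only [triangleWeights, detR, Fin.sum_univ_three, Matrix.cons_val_zero, Matrix.cons_val_one,
    Matrix.cons_val, smul_zero, zero_add, Prod.fst_add, Prod.snd_add, Prod.smul_fst, Prod.smul_snd,
    smul_eq_mul] <;>
  field_simp <;>
  ring

theorem affineIndependent_triangle (h : detR Z X ≠ 0) : AffineIndependent ℝ ![0, X, Z] := by
  rw [affineIndependent_iff_of_fintype]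
  intro w hw hsum
  rw [Finset.weightedVSub_eq_linear_combination _ hw] at hsum
  simp only [Fin.sum_univ_three] at hw hsum
  have h1 : w 1 * X.1 + w 2 * Z.1 = 0 := by simpa using congrArg Prod.fst hsum
  have h2 : w 1 * X.2 + w 2 * Z.2 = 0 := by simpa using congrArg Prod.snd hsum
  have hw1 : w 1 * detR Z X = 0 := by simp only [detR]; linear_combination Z.1 * h2 - Z.2 * h1
  have hw2 : w 2 * detR Z X = 0 := by simp only [detR]; linear_combination X.2 * h1 - X.1 * h2
  have e1 := (mul_eq_zero.1 hw1).resolve_right h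
  have e2 := (mul_eq_zero.1 hw2).resolve_right h
  exact Fin.forall_fin_succ.2
    ⟨by linarith, Fin.forall_fin_succ.2 ⟨e1, Fin.forall_fin_one.2 e2⟩⟩

noncomputable def triangleBasis (h : detR Z X ≠ 0) : AffineBasis (Fin 3) ℝ (ℝ × ℝ) :=
  ⟨![0, X, Z], affineIndependent_triangle h, eq_top_iff.2 fun q _ =>
    affineCombination_triangleWeights h q ▸
      affineCombination_mem_affineSpan (sum_triangleWeights X Z q) _⟩

theorem triangleBasis_coord (h : detR Z X ≠ 0) (i : Fin 3) (q : ℝ × ℝ) :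
    (triangleBasis h).coord i q = triangleWeights X Z q i := by
  conv_lhs => rw [← affineCombination_triangleWeights h q]
  exact (triangleBasis h).coord_apply_combination_of_mem (Finset.mem_univ i)
    (sum_triangleWeights X Z q)

theorem mem_interior_convexHull_triangle (h : 0 < detR Z X) (q : ℝ × ℝ) :
    q ∈ interior (convexHull ℝ {0, X, Z}) ↔
      0 < detR Z q ∧ 0 < detR q X ∧ detR Z q + detR q X < detR Z X := by
  have hrange : Set.range (triangleBasis h.ne') = {0, X, Z} := by
    change Set.range ![0, X, Z] = _
    rw [Matrix.range_cons, Matrix.range_cons_cons_empty, Set.singleton_union]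
  rw [← hrange, AffineBasis.interior_convexHull]
  simp only [Set.mem_ofPred_eq, triangleBasis_coord, triangleWeights, Fin.forall_fin_succ,
    Matrix.cons_val_zero, Matrix.cons_val_succ, Matrix.cons_val_fin_one, forall_const, sub_pos,
    div_lt_one h, div_pos_iff_of_pos_right h]
  tauto

end Triangle

theorem gcd_dvd_detZ (z q : ℤ × ℤ) : (Int.gcd z.1 z.2 : ℤ) ∣ detZ z q :=
  dvd_sub ((Int.gcd_dvd_left _ _).mul_right _) ((Int.gcd_dvd_right _ _).mul_right _)

theorem gcd_mul_gcd_dvd_detZ (z q : ℤ × ℤ) :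
    ((Int.gcd z.1 z.2 * Int.gcd q.1 q.2 : ℕ) : ℤ) ∣ detZ z q := by
  push_cast
  exact dvd_sub (mul_dvd_mul (Int.gcd_dvd_left _ _) (Int.gcd_dvd_right _ _))
    (mul_dvd_mul (Int.gcd_dvd_right _ _) (Int.gcd_dvd_left _ _))

theorem gcd_eq_one_of_natAbs_detZ_eq_gcd {z q : ℤ × ℤ} (hz : 0 < Int.gcd z.1 z.2)
    (h : (detZ z q).natAbs = Int.gcd z.1 z.2) : Int.gcd q.1 q.2 = 1 := by
  have hdvd := Int.natCast_dvd.1 (gcd_mul_gcd_dvd_detZ z q)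
  rw [h] at hdvd
  exact Nat.dvd_one.1 ((Nat.mul_dvd_mul_iff_left hz).1 (by simpa using hdvd))

theorem exists_eq_smul_of_detZ_eq_zero {q y : ℤ × ℤ} (hy : Int.gcd y.1 y.2 = 1)
    (h : detZ q y = 0) : ∃ m : ℤ, q = m • y := by
  have hab := Int.gcd_eq_gcd_ab y.1 y.2
  rw [hy, Nat.cast_one] at hab
  unfold detZ at h
  refine ⟨q.1 * Int.gcdA y.1 y.2 + q.2 * Int.gcdB y.1 y.2, Prod.ext ?_ ?_⟩
  · simp only [Prod.smul_fst, smul_eq_mul]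
    linear_combination q.1 * hab + Int.gcdB y.1 y.2 * h
  · simp only [Prod.smul_snd, smul_eq_mul]
    linear_combination q.2 * hab - Int.gcdA y.1 y.2 * h

theorem detZ_dvd_detZ_of_detZ_eq_zero (z : ℤ × ℤ) {q y : ℤ × ℤ} (hy : Int.gcd y.1 y.2 = 1)
    (h : detZ q y = 0) : detZ z y ∣ detZ z q := by
  obtain ⟨m, rfl⟩ := exists_eq_smul_of_detZ_eq_zero hy h
  exact ⟨m, by simp only [detZ, Prod.smul_fst, Prod.smul_snd, smul_eq_mul]; ring⟩

theorem exists_detZ_eq_gcd (z : ℤ × ℤ) : ∃ p : ℤ × ℤ, detZ z p = Int.gcd z.1 z.2 :=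
  ⟨(-Int.gcdB z.1 z.2, Int.gcdA z.1 z.2), by rw [Int.gcd_eq_gcd_ab]; simp only [detZ]; ring⟩

theorem detZ_ne_zero_of_mem_strip {z x p : ℤ × ℤ} (hp : 0 < detZ z p)
    (hpx : detZ z p < detZ z x) (hx : Int.gcd x.1 x.2 = 1) : detZ p x ≠ 0 := fun h =>
  (Int.le_of_dvd hp (detZ_dvd_detZ_of_detZ_eq_zero z hx h)).not_gt hpx

theorem detZ_add_detZ_ne_of_mem_strip {z x p : ℤ × ℤ} (hp : 0 < detZ z p)
    (hpx : detZ z p < detZ z x) (hzx : Int.gcd (z.1 - x.1) (z.2 - x.2) = 1) :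
    detZ z p + detZ p x ≠ detZ z x := fun h => by
  have hdvd := detZ_dvd_detZ_of_detZ_eq_zero z (q := p - x) (y := z - x) hzx
    (by simp only [detZ, Prod.fst_sub, Prod.snd_sub] at h ⊢; linear_combination -h)
  have hdvd' : detZ z x ∣ detZ z p := by
    have e1 : detZ z (z - x) = -detZ z x := by simp only [detZ, Prod.fst_sub, Prod.snd_sub]; ring
    have e2 : detZ z (p - x) = detZ z p - detZ z x := by
      simp only [detZ, Prod.fst_sub, Prod.snd_sub]; ring
    rw [e1, e2, neg_dvd, dvd_sub_self_right] at hdvd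
    exact hdvd
  exact (Int.le_of_dvd hp hdvd').not_gt hpx

theorem exists_mem_open_triangle_of_gcd_lt_detZ {z x : ℤ × ℤ} (hx : Int.gcd x.1 x.2 = 1)
    (hzx : Int.gcd (z.1 - x.1) (z.2 - x.2) = 1) (hg : 0 < Int.gcd z.1 z.2)
    (hlt : (Int.gcd z.1 z.2 : ℤ) < detZ z x) :
    ∃ p : ℤ × ℤ, 0 < detZ z p ∧ 0 < detZ p x ∧ detZ z p + detZ p x < detZ z x := by
  obtain ⟨p₀, hp₀⟩ := exists_detZ_eq_gcd z
  set g : ℤ := ↑(Int.gcd z.1 z.2)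
  have hg' : 0 < g := by omega
  obtain ⟨a, ha⟩ : g ∣ z.1 := Int.gcd_dvd_left _ _
  obtain ⟨b, hb⟩ : g ∣ z.2 := Int.gcd_dvd_right _ _
  set n := detZ (a, b) x
  have hD : detZ z x = g * n := by simp only [n, detZ, ha, hb]; ring
  have hn : 0 < n := pos_of_mul_pos_right (hD ▸ hg'.trans hlt) hg'.le
  set B := detZ z x - g - detZ p₀ x
  -- `(a, b) = z / g`; this multiple of it moves `detZ p x` into `(detZ z x - g - n, detZ z x - g]`
  set p := p₀ + (B / n) • (a, b)
  have hu : detZ z p = g := by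
    simp only [p, detZ, Prod.fst_add, Prod.snd_add, Prod.smul_fst, Prod.smul_snd, smul_eq_mul, ha,
      hb] at hp₀ ⊢
    linear_combination hp₀
  have hv : detZ p x = detZ z x - g - B % n := by
    have := Int.emod_add_mul_ediv B n
    simp only [p, n, B, detZ, Prod.fst_add, Prod.snd_add, Prod.smul_fst, Prod.smul_snd,
      smul_eq_mul] at this ⊢
    linear_combination this
  have hoff_0x := detZ_ne_zero_of_mem_strip (hu ▸ hg') (hu ▸ hlt) hx
  have hoff_xz := detZ_add_detZ_ne_of_mem_strip (hu ▸ hg') (hu ▸ hlt) hzx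
  have hrem_nonneg := Int.emod_nonneg B hn.ne'
  have hrem_lt := Int.emod_lt_of_pos B hn
  have hwide : n ≤ detZ z x - g + 1 := by nlinarith
  exact ⟨p, by omega, by omega, by omega⟩

theorem minimal_path_iff_general (z x : ℤ × ℤ) (habove : 0 < detZ z x) :
    detZ z x = Int.gcd z.1 z.2 ↔
      (Int.gcd x.1 x.2 = 1 ∧ Int.gcd (z.1 - x.1) (z.2 - x.2) = 1 ∧
        ¬ ∃ p : ℤ × ℤ, toR p ∈ interior (convexHull ℝ {(0 : ℝ × ℝ), toR x, toR z})) := by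
  have hg : 0 < Int.gcd z.1 z.2 := Int.gcd_pos_iff.2 <| by
    contrapose! habove
    simp [detZ, habove]
  have hinterior (p : ℤ × ℤ) : toR p ∈ interior (convexHull ℝ {0, toR x, toR z}) ↔
      0 < detZ z p ∧ 0 < detZ p x ∧ detZ z p + detZ p x < detZ z x := by
    rw [mem_interior_convexHull_triangle (by rwa [detR_toR, Int.cast_pos])]
    simp only [detR_toR]
    norm_cast
  simp only [hinterior]
  constructor
  · intro hD
    have hzx : detZ z (z - x) = -detZ z x := by simp only [detZ, Prod.fst_sub, Prod.snd_sub]; ring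
    refine ⟨gcd_eq_one_of_natAbs_detZ_eq_gcd hg (by rw [hD, Int.natAbs_natCast]),
      gcd_eq_one_of_natAbs_detZ_eq_gcd (q := z - x) hg (by rw [hzx, Int.natAbs_neg, hD,
        Int.natAbs_natCast]), ?_⟩
    rintro ⟨p, hu, hv, huv⟩
    exact (Int.le_of_dvd hu (gcd_dvd_detZ z p)).not_gt (by omega)
  · rintro ⟨hx, hzx, hempty⟩
    by_contra hne
    have hlt := lt_of_le_of_ne (Int.le_of_dvd habove (gcd_dvd_detZ z x)) (Ne.symm hne)
    exact hempty (exists_mem_open_triangle_of_gcd_lt_detZ hx hzx hg hlt)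

/-- Characterization of minimal paths: for `z` with `z₁ > 0` and a lattice point `x`
with `0 < x₁ < z₁` strictly above the line `L` through `0` and `z` (i.e. `detZ z x > 0`),
the point `x` lies on the closest rational line parallel to `L` above `L`
(i.e. `detZ z x = gcd(z₁,z₂)`, the minimal positive value of `z₁x₂ - z₂x₁`)
if and only if `gcd(x₁,x₂) = gcd(z₁-x₁,z₂-x₂) = 1` and the triangle with vertices
`(0,0)`, `x`, `z` has no lattice point in its interior. -/
theorem minimal_path_iff (z x : ℤ × ℤ) (hz : 0 < z.1)
    (hx1 : 0 < x.1) (hx2 : x.1 < z.1) (habove : 0 < detZ z x) :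
    detZ z x = Int.gcd z.1 z.2 ↔
      (Int.gcd x.1 x.2 = 1 ∧ Int.gcd (z.1 - x.1) (z.2 - x.2) = 1 ∧
        ¬ ∃ p : ℤ × ℤ, toR p ∈ interior (convexHull ℝ {(0 : ℝ × ℝ), toR x, toR z})) :=
  minimal_path_iff_general z x habove
end

section
/- With the twisted symmetrization operators Ψ_r as above and A_r = Im(Ψ_r), there exists a unique K-linear map m_{r,s} : A_r ⊗ A_s → A_{r+s} such that m_{r,s}(Ψ_r(P) ⊗ Ψ_s(Q)) = Ψ_{r+s}(P(z_1,...,z_r)·Q(z_{r+1},...,z_{r+s})) for all Laurent polynomials P, Q; moreover these maps endow A = K ⊕ ⊕_{r≥1} A_r with the structure of an associative graded algebra. -/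
open scoped TensorProduct

/-- Laurent polynomials `K[z₁^{±1},…,z_r^{±1}]` as the algebra of exponent vectors. -/
abbrev Laur (K : Type) [Field K] (r : ℕ) : Type :=
  AddMonoidAlgebra K (Fin r → ℤ)

instance laurDomain (K : Type) [Field K] (r : ℕ) : IsDomain (Laur K r) := by
  constructor

/-- The fraction field `K(z₁,…,z_r)` of the Laurent polynomial ring. -/
abbrev FracLaur (K : Type) [Field K] (r : ℕ) : Type _ := FractionRing (Laur K r)

/-- Permutation of exponent vectors. -/
def permExp {r : ℕ} (γ : Equiv.Perm (Fin r)) : (Fin r → ℤ) ≃+ (Fin r → ℤ) where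
  toFun v := v ∘ γ.symm
  invFun v := v ∘ γ
  left_inv v := by funext i; simp
  right_inv v := by funext i; simp
  map_add' v w := rfl

/-- The action of `γ ∈ S_r` on Laurent polynomials, permuting the variables. -/
noncomputable def permLaur (K : Type) [Field K] {r : ℕ} (γ : Equiv.Perm (Fin r)) :
    Laur K r ≃ₐ[K] Laur K r :=
  AddMonoidAlgebra.domCongr K K (permExp γ)

/-- The monomial `z^v`. -/
noncomputable def mono (K : Type) [Field K] {r : ℕ} (v : Fin r → ℤ) : Laur K r :=
  AddMonoidAlgebra.single v 1

/-- The numerator `∏_{i<j} (1-σ z_i/z_j)(1-σ̄ z_i/z_j)(1-(σσ̄)⁻¹ z_i/z_j)` of the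
multiplier `∏_{i<j} ζ̃(z_i/z_j)`. -/
noncomputable def zetaNum (K : Type) [Field K] (σ σb : K) (r : ℕ) : Laur K r :=
  ∏ p ∈ Finset.univ.filter (fun p : Fin r × Fin r => p.1 < p.2),
    ((1 - algebraMap K (Laur K r) σ * mono K (Pi.single p.1 1 - Pi.single p.2 1)) *
     (1 - algebraMap K (Laur K r) σb * mono K (Pi.single p.1 1 - Pi.single p.2 1)) *
     (1 - algebraMap K (Laur K r) (σ * σb)⁻¹ *
        mono K (Pi.single p.1 1 - Pi.single p.2 1)))

/-- The denominator `∏_{i<j} (1 - z_i/z_j)` of the multiplier `∏_{i<j} ζ̃(z_i/z_j)`. -/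
noncomputable def zetaDen (K : Type) [Field K] (r : ℕ) : Laur K r :=
  ∏ p ∈ Finset.univ.filter (fun p : Fin r × Fin r => p.1 < p.2),
    (1 - mono K (Pi.single p.1 1 - Pi.single p.2 1))

/-- The twisted symmetrization operator
`Ψ_r(P) = Σ_{γ ∈ S_r} γ·(∏_{i<j} ζ̃(z_i/z_j) · P)`, computed in the fraction field
`K(z₁,…,z_r)`. -/
noncomputable def Psi (K : Type) [Field K] (σ σb : K) (r : ℕ) (P : Laur K r) :
    FracLaur K r :=
  ∑ γ : Equiv.Perm (Fin r),
    algebraMap (Laur K r) (FracLaur K r) (permLaur K γ (zetaNum K σ σb r * P)) /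
      algebraMap (Laur K r) (FracLaur K r) (permLaur K γ (zetaDen K r))

/-- `A_r = Im Ψ_r`, as a `K`-subspace of the fraction field. -/
noncomputable def Amod (K : Type) [Field K] (σ σb : K) (r : ℕ) :
    Submodule K (FracLaur K r) :=
  Submodule.span K (Set.range (Psi K σ σb r))

/-- `Ψ_r(P)` as an element of `A_r`. -/
noncomputable def psiEl (K : Type) [Field K] (σ σb : K) (r : ℕ) (P : Laur K r) :
    Amod K σ σb r :=
  ⟨Psi K σ σb r P, Submodule.subset_span ⟨P, rfl⟩⟩

/-- Extension of exponent vectors by zero: the first `r` of `r+s` variables. -/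
def extL (r s : ℕ) : (Fin r → ℤ) →+ (Fin (r + s) → ℤ) where
  toFun v k := if h : (k : ℕ) < r then v ⟨k, h⟩ else 0
  map_zero' := by funext k; by_cases h : (k : ℕ) < r <;> simp [h]
  map_add' v w := by funext k; by_cases h : (k : ℕ) < r <;> simp [h]

/-- Extension of exponent vectors by zero: the last `s` of `r+s` variables. -/
def extR (r s : ℕ) : (Fin s → ℤ) →+ (Fin (r + s) → ℤ) where
  toFun v k := if h : r ≤ (k : ℕ) then v ⟨(k : ℕ) - r, by omega⟩ else 0
  map_zero' := by funext k; by_cases h : r ≤ (k : ℕ) <;> simp [h]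
  map_add' v w := by funext k; by_cases h : r ≤ (k : ℕ) <;> simp [h]

/-- `i_{r,s}` on the first factor: `P(z₁,…,z_r) ↦ P(z₁,…,z_r)` in `r+s` variables. -/
noncomputable def embL (K : Type) [Field K] (r s : ℕ) : Laur K r →ₐ[K] Laur K (r + s) :=
  AddMonoidAlgebra.mapDomainAlgHom K K (extL r s)

/-- `i_{r,s}` on the second factor: `Q(z₁,…,z_s) ↦ Q(z_{r+1},…,z_{r+s})`. -/
noncomputable def embR (K : Type) [Field K] (r s : ℕ) : Laur K s →ₐ[K] Laur K (r + s) :=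
  AddMonoidAlgebra.mapDomainAlgHom K K (extR r s)

/-- The property characterizing the shuffle multiplication
`m_{r,s} : A_r ⊗ A_s → A_{r+s}`: the diagram
`m_{r,s}(Ψ_r(P) ⊗ Ψ_s(Q)) = Ψ_{r+s}(P(z₁,…,z_r)·Q(z_{r+1},…,z_{r+s}))` commutes. -/
def MulProp (K : Type) [Field K] (σ σb : K) (r s : ℕ)
    (m : Amod K σ σb r ⊗[K] Amod K σ σb s →ₗ[K] Amod K σ σb (r + s)) : Prop :=
  ∀ (P : Laur K r) (Q : Laur K s),
    m (psiEl K σ σb r P ⊗ₜ[K] psiEl K σ σb s Q)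
      = psiEl K σ σb (r + s) (embL K r s P * embR K r s Q)

/-
Split `∏_{i<j} ζ̃(z_i/z_j)` in `r + s` variables into the products over pairs inside the first `r`
variables, inside the last `s` variables, and the crossing pairs. The crossing factor is invariant
under `S_r × S_s`, so summing `Ψ_{r+s}(P(z₁,…,z_r) Q(z_{r+1},…,z_{r+s}))` first over each left coset
of `S_r × S_s` turns it into a sum of permuted copies of (crossing factor)`·Ψ_r(P)·Ψ_s(Q)`. Hence
it vanishes as soon as `Ψ_r(P)` or `Ψ_s(Q)` does, and `(P, Q) ↦ Ψ_{r+s}(P·Q)` descends to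
`A_r ⊗ A_s`, uniquely because `Ψ_r` and `Ψ_s` are onto. Associativity reduces to the
associativity of concatenating `P`, `Q`, `R` into `r + s + t` variables.
-/
open Function Polynomial

section General

theorem Fin.castAdd_lt_natAdd {r s : ℕ} (i : Fin r) (j : Fin s) :
    Fin.castAdd s i < Fin.natAdd r j := by
  simp only [Fin.lt_def, Fin.val_castAdd, Fin.val_natAdd]
  omega

theorem Fin.castAdd_ne_natAdd {r s : ℕ} (i : Fin r) (j : Fin s) :
    Fin.castAdd s i ≠ Fin.natAdd r j :=
  (Fin.castAdd_lt_natAdd i j).ne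

theorem LinearMap.exists_comp_eq_of_surjective_of_ker_le {R M M' P : Type*} [Ring R]
    [AddCommGroup M] [AddCommGroup M'] [AddCommGroup P] [Module R M] [Module R M'] [Module R P]
    (f : M →ₗ[R] M') (hf : Surjective f) (g : M →ₗ[R] P) (h : LinearMap.ker f ≤ LinearMap.ker g) :
    ∃ g' : M' →ₗ[R] P, g' ∘ₗ f = g :=
  ⟨(LinearMap.ker f).liftQ g h ∘ₗ (f.quotKerEquivOfSurjective hf).symm.toLinearMap, by
    ext x
    simp⟩

theorem TensorProduct.existsUnique_map_tmul_eq_of_surjective {R M N M' N' P : Type*} [CommRing R]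
    [AddCommGroup M] [AddCommGroup N] [AddCommGroup M'] [AddCommGroup N'] [AddCommGroup P]
    [Module R M] [Module R N] [Module R M'] [Module R N'] [Module R P]
    (f : M →ₗ[R] M') (g : N →ₗ[R] N') (hf : Surjective f) (hg : Surjective g)
    (B : M →ₗ[R] N →ₗ[R] P) (hB₁ : ∀ x y, f x = 0 → B x y = 0)
    (hB₂ : ∀ x y, g y = 0 → B x y = 0) :
    ∃! m : M' ⊗[R] N' →ₗ[R] P, ∀ x y, m (f x ⊗ₜ g y) = B x y := by
  obtain ⟨B₁, hB₁'⟩ := LinearMap.exists_comp_eq_of_surjective_of_ker_le f hf B fun x hx =>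
    LinearMap.ext fun y => hB₁ x y hx
  obtain ⟨B₂, hB₂'⟩ := LinearMap.exists_comp_eq_of_surjective_of_ker_le g hg B₁.flip fun y hy =>
    LinearMap.ext fun x' => by
      obtain ⟨x, rfl⟩ := hf x'
      simpa [← hB₁'] using hB₂ x y hy
  have lift_tmul x y : TensorProduct.lift B₂.flip (f x ⊗ₜ g y) = B x y := by
    rw [TensorProduct.lift.tmul, LinearMap.flip_apply, ← LinearMap.comp_apply B₂, hB₂',
      LinearMap.flip_apply, ← LinearMap.comp_apply B₁, hB₁']
  refine ⟨TensorProduct.lift B₂.flip, lift_tmul, fun m hm => TensorProduct.ext' fun x' y' => ?_⟩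
  obtain ⟨x, rfl⟩ := hf x'
  obtain ⟨y, rfl⟩ := hg y'
  rw [hm, lift_tmul]

theorem Subgroup.sum_eq_sum_quotient_sum {G M : Type*} [Group G] [Fintype G] [AddCommMonoid M]
    (H : Subgroup G) [Fintype (G ⧸ H)] [Fintype H] (f : G → M) :
    ∑ g, f g = ∑ q : G ⧸ H, ∑ h : H, f (q.out * h) := by
  classical
  rw [← Finset.sum_fiberwise Finset.univ (QuotientGroup.mk : G → G ⧸ H) f]
  refine Finset.sum_congr rfl fun q _ =>
    (Finset.sum_bij (s := Finset.univ) (fun (h : H) _ => q.out * (h : G)) ?_ ?_ ?_ ?_).symm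
  · intro h _
    simp [QuotientGroup.mk_mul_of_mem q.out h.2]
  · intro h _ h' _ hh
    exact Subtype.ext (mul_left_cancel hh)
  · intro g hg
    simp only [Finset.mem_filter, Finset.mem_univ, true_and] at hg
    have hmem : q.out⁻¹ * g ∈ H := QuotientGroup.eq.mp (by rw [QuotientGroup.out_eq', hg])
    exact ⟨⟨_, hmem⟩, Finset.mem_univ _, mul_inv_cancel_left _ _⟩
  · intro _ _
    rfl

theorem MonoidHom.sum_eq_sum_quotient_range_sum {G H M : Type*} [Group G] [Group H] [Fintype G]
    [Fintype H] [AddCommMonoid M] (ι : H →* G) (hι : Injective ι) [Fintype (G ⧸ ι.range)]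
    (f : G → M) : ∑ g, f g = ∑ q : G ⧸ ι.range, ∑ h, f (q.out * ι h) := by
  classical
  rw [ι.range.sum_eq_sum_quotient_sum]
  exact Finset.sum_congr rfl fun q _ =>
    (Fintype.sum_equiv (MonoidHom.ofInjective hι).toEquiv _ _ fun h => rfl).symm

end General

section Laurent

variable (K : Type) [Field K]

theorem Laur.algHom_ext {n m : ℕ} {φ ψ : Laur K n →ₐ[K] Laur K m}
    (h : ∀ v, φ (mono K v) = ψ (mono K v)) : φ = ψ :=
  AddMonoidAlgebra.algHom_ext h (Subsingleton.elim _ _)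

theorem permLaur_mono {n : ℕ} (γ : Equiv.Perm (Fin n)) (v : Fin n → ℤ) :
    permLaur K γ (mono K v) = mono K (v ∘ γ.symm) :=
  AddMonoidAlgebra.domCongr_single _ _ _

theorem permLaur_mul {n : ℕ} (γ δ : Equiv.Perm (Fin n)) (x : Laur K n) :
    permLaur K (γ * δ) x = permLaur K γ (permLaur K δ x) := by
  suffices h : (permLaur K (γ * δ)).toAlgHom
      = (permLaur K γ).toAlgHom.comp (permLaur K δ).toAlgHom from DFunLike.congr_fun h x
  exact Laur.algHom_ext K fun v => by simp [permLaur_mono]; rfl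

theorem embL_mono (r s : ℕ) (v : Fin r → ℤ) : embL K r s (mono K v) = mono K (extL r s v) := by
  simp [embL, mono]

theorem embR_mono (r s : ℕ) (v : Fin s → ℤ) : embR K r s (mono K v) = mono K (extR r s v) := by
  simp [embR, mono]

theorem extL_castAdd {r s : ℕ} (v : Fin r → ℤ) (i : Fin r) :
    extL r s v (Fin.castAdd s i) = v i := by
  simp [extL]

theorem extL_natAdd {r s : ℕ} (v : Fin r → ℤ) (j : Fin s) :
    extL r s v (Fin.natAdd r j) = 0 := by
  simp [extL]

theorem extR_castAdd {r s : ℕ} (v : Fin s → ℤ) (i : Fin r) :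
    extR r s v (Fin.castAdd s i) = 0 := by
  simp [extR]

theorem extR_natAdd {r s : ℕ} (v : Fin s → ℤ) (j : Fin s) :
    extR r s v (Fin.natAdd r j) = v j := by
  simp [extR]

theorem embL_injective (r s : ℕ) : Injective (embL K r s) := by
  refine AddMonoidAlgebra.mapDomain_injective fun v w h => funext fun i => ?_
  simpa [extL_castAdd] using congrFun h (Fin.castAdd s i)

theorem embR_injective (r s : ℕ) : Injective (embR K r s) := by
  refine AddMonoidAlgebra.mapDomain_injective fun v w h => funext fun j => ?_
  simpa [extR_natAdd] using congrFun h (Fin.natAdd r j)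

noncomputable def ratioMono {n : ℕ} (i j : Fin n) : Laur K n :=
  mono K (Pi.single i 1 - Pi.single j 1)

theorem permLaur_ratioMono {n : ℕ} (γ : Equiv.Perm (Fin n)) (i j : Fin n) :
    permLaur K γ (ratioMono K i j) = ratioMono K (γ i) (γ j) := by
  rw [ratioMono, permLaur_mono, ratioMono]
  congr 1
  funext k
  simp [Pi.single_apply, Equiv.symm_apply_eq]

theorem embL_ratioMono (r s : ℕ) (i j : Fin r) :
    embL K r s (ratioMono K i j) = ratioMono K (Fin.castAdd s i) (Fin.castAdd s j) := by
  rw [ratioMono, embL_mono, ratioMono]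
  congr 1
  funext k
  induction k using Fin.addCases <;>
    simp [extL_castAdd, extL_natAdd, Pi.single_apply, (Fin.castAdd_ne_natAdd _ _).symm]

theorem embR_ratioMono (r s : ℕ) (i j : Fin s) :
    embR K r s (ratioMono K i j) = ratioMono K (Fin.natAdd r i) (Fin.natAdd r j) := by
  rw [ratioMono, embR_mono, ratioMono]
  congr 1
  funext k
  induction k using Fin.addCases <;>
    simp [extR_castAdd, extR_natAdd, Pi.single_apply, Fin.castAdd_ne_natAdd]

/-- `∏_{i<j} f(z_i/z_j)`. -/
noncomputable def pairProd (f : K[X]) (n : ℕ) : Laur K n :=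
  ∏ p ∈ Finset.univ.filter (fun p : Fin n × Fin n => p.1 < p.2), aeval (ratioMono K p.1 p.2) f

/-- `∏_{i ≤ r < j} f(z_i/z_j)`. -/
noncomputable def crossProd (f : K[X]) (r s : ℕ) : Laur K (r + s) :=
  ∏ p : Fin r × Fin s, aeval (ratioMono K (Fin.castAdd s p.1) (Fin.natAdd r p.2)) f

noncomputable def zetaNumPoly (σ σb : K) : K[X] :=
  (1 - C σ * X) * (1 - C σb * X) * (1 - C (σ * σb)⁻¹ * X)

theorem zetaNum_eq_pairProd (σ σb : K) (n : ℕ) :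
    zetaNum K σ σb n = pairProd K (zetaNumPoly K σ σb) n := by
  simp [zetaNum, zetaNumPoly, pairProd, ratioMono]

theorem zetaDen_eq_pairProd (n : ℕ) : zetaDen K n = pairProd K (1 - X) n := by
  simp [zetaDen, pairProd, ratioMono]

theorem pairProd_eq_prod_prod (f : K[X]) (n : ℕ) :
    pairProd K f n = ∏ i, ∏ j, if i < j then aeval (ratioMono K i j) f else 1 := by
  rw [pairProd, Finset.prod_filter, Fintype.prod_prod_type]

theorem pairProd_add (f : K[X]) (r s : ℕ) :
    pairProd K f (r + s)
      = embL K r s (pairProd K f r) * embR K r s (pairProd K f s) * crossProd K f r s := by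
  simp only [pairProd_eq_prod_prod, crossProd, map_prod, apply_ite, map_one,
    ← aeval_algHom_apply, embL_ratioMono, embR_ratioMono, Fin.prod_univ_add,
    Fintype.prod_prod_type, Finset.prod_mul_distrib, (Fin.strictMono_castAdd s).lt_iff_lt,
    Fin.natAdd_lt_natAdd_iff, Fin.castAdd_lt_natAdd, (Fin.castAdd_lt_natAdd _ _).not_gt,
    if_true, if_false, Finset.prod_const_one, mul_one]
  ring

/-- `S_r × S_s ⊆ S_{r+s}`, the first factor permuting the first `r` letters. -/
noncomputable def sumPerm (r s : ℕ) :
    Equiv.Perm (Fin r) × Equiv.Perm (Fin s) →* Equiv.Perm (Fin (r + s)) :=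
  finSumFinEquiv.permCongrHom.toMonoidHom.comp (Equiv.Perm.sumCongrHom (Fin r) (Fin s))

theorem sumPerm_castAdd {r s : ℕ} (αβ : Equiv.Perm (Fin r) × Equiv.Perm (Fin s)) (i : Fin r) :
    sumPerm r s αβ (Fin.castAdd s i) = Fin.castAdd s (αβ.1 i) := by
  simp [sumPerm, Equiv.permCongrHom, Equiv.permCongr_apply]

theorem sumPerm_natAdd {r s : ℕ} (αβ : Equiv.Perm (Fin r) × Equiv.Perm (Fin s)) (j : Fin s) :
    sumPerm r s αβ (Fin.natAdd r j) = Fin.natAdd r (αβ.2 j) := by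
  simp [sumPerm, Equiv.permCongrHom, Equiv.permCongr_apply]

theorem sumPerm_injective (r s : ℕ) : Injective (sumPerm r s) :=
  finSumFinEquiv.permCongrHom.injective.comp Equiv.Perm.sumCongrHom_injective

theorem permLaur_sumPerm_embL {r s : ℕ} (αβ : Equiv.Perm (Fin r) × Equiv.Perm (Fin s))
    (x : Laur K r) :
    permLaur K (sumPerm r s αβ) (embL K r s x) = embL K r s (permLaur K αβ.1 x) := by
  suffices h : (permLaur K (sumPerm r s αβ)).toAlgHom.comp (embL K r s)
      = (embL K r s).comp (permLaur K αβ.1).toAlgHom from DFunLike.congr_fun h x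
  refine Laur.algHom_ext K fun v => ?_
  show permLaur K _ (embL K r s (mono K v)) = embL K r s (permLaur K _ (mono K v))
  rw [embL_mono, permLaur_mono, permLaur_mono, embL_mono]
  congr 1
  rw [Equiv.comp_symm_eq]
  funext k
  induction k using Fin.addCases <;>
    simp [sumPerm_castAdd, sumPerm_natAdd, extL_castAdd, extL_natAdd]

theorem permLaur_sumPerm_embR {r s : ℕ} (αβ : Equiv.Perm (Fin r) × Equiv.Perm (Fin s))
    (x : Laur K s) :
    permLaur K (sumPerm r s αβ) (embR K r s x) = embR K r s (permLaur K αβ.2 x) := by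
  suffices h : (permLaur K (sumPerm r s αβ)).toAlgHom.comp (embR K r s)
      = (embR K r s).comp (permLaur K αβ.2).toAlgHom from DFunLike.congr_fun h x
  refine Laur.algHom_ext K fun v => ?_
  show permLaur K _ (embR K r s (mono K v)) = embR K r s (permLaur K _ (mono K v))
  rw [embR_mono, permLaur_mono, permLaur_mono, embR_mono]
  congr 1
  rw [Equiv.comp_symm_eq]
  funext k
  induction k using Fin.addCases <;>
    simp [sumPerm_castAdd, sumPerm_natAdd, extR_castAdd, extR_natAdd]

theorem permLaur_sumPerm_crossProd (f : K[X]) (r s : ℕ)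
    (αβ : Equiv.Perm (Fin r) × Equiv.Perm (Fin s)) :
    permLaur K (sumPerm r s αβ) (crossProd K f r s) = crossProd K f r s := by
  simp only [crossProd, map_prod, ← aeval_algHom_apply, permLaur_ratioMono, sumPerm_castAdd,
    sumPerm_natAdd]
  exact Fintype.prod_equiv (αβ.1.prodCongr αβ.2) _ _ fun _ => rfl

end Laurent

section Fraction

variable (K : Type) [Field K]

theorem FracLaur.ringHom_ext {n : ℕ} {L : Type*} [Semiring L] {f g : FracLaur K n →+* L}
    (h : ∀ x : Laur K n, f (algebraMap _ _ x) = g (algebraMap _ _ x)) : f = g :=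
  IsLocalization.ringHom_ext (nonZeroDivisors (Laur K n)) (RingHom.ext h)

noncomputable def fracMap {n m : ℕ} (φ : Laur K n →ₐ[K] Laur K m) (hφ : Injective φ) :
    FracLaur K n →+* FracLaur K m :=
  IsLocalization.map _ (φ : Laur K n →+* Laur K m)
    (nonZeroDivisors_le_comap_nonZeroDivisors_of_injective _ hφ)

theorem fracMap_algebraMap {n m : ℕ} (φ : Laur K n →ₐ[K] Laur K m) (hφ : Injective φ)
    (x : Laur K n) : fracMap K φ hφ (algebraMap _ _ x) = algebraMap _ _ (φ x) :=
  IsLocalization.map_eq _ _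

noncomputable def permFrac {n : ℕ} (γ : Equiv.Perm (Fin n)) : FracLaur K n →+* FracLaur K n :=
  fracMap K (permLaur K γ).toAlgHom (permLaur K γ).injective

noncomputable def fracEmbL (r s : ℕ) : FracLaur K r →+* FracLaur K (r + s) :=
  fracMap K (embL K r s) (embL_injective K r s)

noncomputable def fracEmbR (r s : ℕ) : FracLaur K s →+* FracLaur K (r + s) :=
  fracMap K (embR K r s) (embR_injective K r s)

@[simp]
theorem permFrac_algebraMap {n : ℕ} (γ : Equiv.Perm (Fin n)) (x : Laur K n) :
    permFrac K γ (algebraMap _ _ x) = algebraMap _ _ (permLaur K γ x) :=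
  fracMap_algebraMap K _ _ x

@[simp]
theorem fracEmbL_algebraMap (r s : ℕ) (x : Laur K r) :
    fracEmbL K r s (algebraMap _ _ x) = algebraMap _ _ (embL K r s x) :=
  fracMap_algebraMap K _ _ x

@[simp]
theorem fracEmbR_algebraMap (r s : ℕ) (x : Laur K s) :
    fracEmbR K r s (algebraMap _ _ x) = algebraMap _ _ (embR K r s x) :=
  fracMap_algebraMap K _ _ x

theorem permFrac_mul {n : ℕ} (γ δ : Equiv.Perm (Fin n)) (y : FracLaur K n) :
    permFrac K (γ * δ) y = permFrac K γ (permFrac K δ y) := by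
  suffices h : permFrac K (γ * δ) = (permFrac K γ).comp (permFrac K δ) from
    DFunLike.congr_fun h y
  exact FracLaur.ringHom_ext K fun x => by simp [permLaur_mul]

theorem permFrac_sumPerm_fracEmbL {r s : ℕ} (αβ : Equiv.Perm (Fin r) × Equiv.Perm (Fin s))
    (y : FracLaur K r) :
    permFrac K (sumPerm r s αβ) (fracEmbL K r s y) = fracEmbL K r s (permFrac K αβ.1 y) := by
  suffices h : (permFrac K (sumPerm r s αβ)).comp (fracEmbL K r s)
      = (fracEmbL K r s).comp (permFrac K αβ.1) from DFunLike.congr_fun h y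
  exact FracLaur.ringHom_ext K fun x => by simp [permLaur_sumPerm_embL]

theorem permFrac_sumPerm_fracEmbR {r s : ℕ} (αβ : Equiv.Perm (Fin r) × Equiv.Perm (Fin s))
    (y : FracLaur K s) :
    permFrac K (sumPerm r s αβ) (fracEmbR K r s y) = fracEmbR K r s (permFrac K αβ.2 y) := by
  suffices h : (permFrac K (sumPerm r s αβ)).comp (fracEmbR K r s)
      = (fracEmbR K r s).comp (permFrac K αβ.2) from DFunLike.congr_fun h y
  exact FracLaur.ringHom_ext K fun x => by simp [permLaur_sumPerm_embR]

noncomputable def pairFrac (f g : K[X]) (n : ℕ) : FracLaur K n :=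
  algebraMap _ _ (pairProd K f n) / algebraMap _ _ (pairProd K g n)

noncomputable def crossFrac (f g : K[X]) (r s : ℕ) : FracLaur K (r + s) :=
  algebraMap _ _ (crossProd K f r s) / algebraMap _ _ (crossProd K g r s)

theorem pairFrac_add (f g : K[X]) (r s : ℕ) :
    pairFrac K f g (r + s)
      = fracEmbL K r s (pairFrac K f g r) * fracEmbR K r s (pairFrac K f g s)
          * crossFrac K f g r s := by
  simp only [pairFrac, crossFrac, pairProd_add, map_div₀, map_mul, fracEmbL_algebraMap,
    fracEmbR_algebraMap, div_mul_div_comm]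

theorem permFrac_sumPerm_crossFrac (f g : K[X]) {r s : ℕ}
    (αβ : Equiv.Perm (Fin r) × Equiv.Perm (Fin s)) :
    permFrac K (sumPerm r s αβ) (crossFrac K f g r s) = crossFrac K f g r s := by
  simp [crossFrac, permLaur_sumPerm_crossProd]

end Fraction

section Shuffle

variable (K : Type) [Field K] (σ σb : K)

theorem Psi_eq_sum_permFrac (n : ℕ) (P : Laur K n) :
    Psi K σ σb n P
      = ∑ γ, permFrac K γ (pairFrac K (zetaNumPoly K σ σb) (1 - X) n * algebraMap _ _ P) := by
  refine Finset.sum_congr rfl fun γ _ => ?_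
  simp only [pairFrac, ← zetaNum_eq_pairProd, ← zetaDen_eq_pairProd, map_mul, map_div₀,
    permFrac_algebraMap]
  ring

open Classical in
/-- The shuffle formula: summing over `S_r × S_s` first factors `Ψ_{r+s}(P ⊗ Q)` through
`Ψ_r(P)` and `Ψ_s(Q)`. -/
theorem Psi_embL_mul_embR (r s : ℕ) (P : Laur K r) (Q : Laur K s) :
    Psi K σ σb (r + s) (embL K r s P * embR K r s Q)
      = ∑ q : Equiv.Perm (Fin (r + s)) ⧸ (sumPerm r s).range, permFrac K q.out
          (crossFrac K (zetaNumPoly K σ σb) (1 - X) r s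
            * fracEmbL K r s (Psi K σ σb r P) * fracEmbR K r s (Psi K σ σb s Q)) := by
  rw [Psi_eq_sum_permFrac, (sumPerm r s).sum_eq_sum_quotient_range_sum (sumPerm_injective r s)]
  refine Finset.sum_congr rfl fun q _ => ?_
  simp only [permFrac_mul, ← map_sum]
  congr 1
  rw [pairFrac_add, Psi_eq_sum_permFrac, Psi_eq_sum_permFrac, map_sum, map_sum,
    mul_assoc (crossFrac _ _ _ _ _), Finset.sum_mul_sum, Finset.mul_sum, Fintype.sum_prod_type]
  refine Finset.sum_congr rfl fun α _ => ?_
  rw [Finset.mul_sum]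
  refine Finset.sum_congr rfl fun β _ => ?_
  simp only [map_mul, permFrac_sumPerm_crossFrac, permFrac_sumPerm_fracEmbL,
    permFrac_sumPerm_fracEmbR, ← fracEmbL_algebraMap, ← fracEmbR_algebraMap]
  ring

theorem Psi_embL_mul_embR_eq_zero {r s : ℕ} {P : Laur K r} {Q : Laur K s}
    (h : Psi K σ σb r P = 0 ∨ Psi K σ σb s Q = 0) :
    Psi K σ σb (r + s) (embL K r s P * embR K r s Q) = 0 := by
  rw [Psi_embL_mul_embR]
  rcases h with h | h <;> simp [h]

end Shuffle

section Multiplication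

variable (K : Type) [Field K] (σ σb : K)

noncomputable def psiLin (n : ℕ) : Laur K n →ₗ[K] FracLaur K n where
  toFun := Psi K σ σb n
  map_add' P Q := by
    simp only [Psi, mul_add, map_add, add_div, Finset.sum_add_distrib]
  map_smul' c P := by
    simp only [Psi, RingHom.id_apply, Finset.smul_sum]
    refine Finset.sum_congr rfl fun γ _ => ?_
    rw [mul_smul_comm, map_smul, Algebra.smul_def, map_mul, ← IsScalarTower.algebraMap_apply,
      ← Algebra.smul_def, smul_div_assoc]

theorem Amod_eq_range_psiLin (n : ℕ) : Amod K σ σb n = LinearMap.range (psiLin K σ σb n) := by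
  rw [Amod, ← Submodule.span_eq (LinearMap.range (psiLin K σ σb n)), LinearMap.coe_range]
  rfl

noncomputable def psiElLin (n : ℕ) : Laur K n →ₗ[K] Amod K σ σb n where
  toFun := psiEl K σ σb n
  map_add' P Q := Subtype.ext ((psiLin K σ σb n).map_add P Q)
  map_smul' c P := Subtype.ext ((psiLin K σ σb n).map_smul c P)

theorem psiElLin_surjective (n : ℕ) : Surjective (psiElLin K σ σb n) := by
  rintro ⟨x, hx⟩
  rw [Amod_eq_range_psiLin] at hx
  obtain ⟨P, rfl⟩ := hx
  exact ⟨P, rfl⟩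

theorem psiElLin_eq_zero {n : ℕ} {P : Laur K n} :
    psiElLin K σ σb n P = 0 ↔ Psi K σ σb n P = 0 :=
  Subtype.ext_iff

theorem existsUnique_mulProp (r s : ℕ) :
    ∃! m : Amod K σ σb r ⊗[K] Amod K σ σb s →ₗ[K] Amod K σ σb (r + s), MulProp K σ σb r s m :=
  TensorProduct.existsUnique_map_tmul_eq_of_surjective (psiElLin K σ σb r) (psiElLin K σ σb s)
    (psiElLin_surjective K σ σb r) (psiElLin_surjective K σ σb s)
    (LinearMap.mk₂ K (fun P Q => psiElLin K σ σb (r + s) (embL K r s P * embR K r s Q))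
      (fun P P' Q => by rw [map_add, add_mul, map_add])
      (fun c P Q => by rw [map_smul, smul_mul_assoc, map_smul])
      (fun P Q Q' => by rw [map_add, mul_add, map_add])
      (fun c P Q => by rw [map_smul, mul_smul_comm, map_smul]))
    (fun _ _ h => (psiElLin_eq_zero K σ σb).mpr
      (Psi_embL_mul_embR_eq_zero K σ σb (.inl ((psiElLin_eq_zero K σ σb).mp h))))
    (fun _ _ h => (psiElLin_eq_zero K σ σb).mpr
      (Psi_embL_mul_embR_eq_zero K σ σb (.inr ((psiElLin_eq_zero K σ σb).mp h))))

end Multiplication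

section Associativity

variable (K : Type) [Field K]

def castExp {n m : ℕ} (h : n = m) : (Fin n → ℤ) ≃+ (Fin m → ℤ) where
  toFun v := v ∘ Fin.cast h.symm
  invFun v := v ∘ Fin.cast h
  left_inv v := by funext i; simp
  right_inv v := by funext i; simp
  map_add' _ _ := rfl

/-- Reindexing along `n = m`, to compare `Laur K ((r + s) + t)` with `Laur K (r + (s + t))`. -/
noncomputable def castLaur {n m : ℕ} (h : n = m) : Laur K n ≃ₐ[K] Laur K m :=
  AddMonoidAlgebra.domCongr K K (castExp h)

theorem castLaur_mono {n m : ℕ} (h : n = m) (v : Fin n → ℤ) :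
    castLaur K h (mono K v) = mono K (v ∘ Fin.cast h.symm) :=
  AddMonoidAlgebra.domCongr_single _ _ _

theorem heq_castLaur {n m : ℕ} (h : n = m) (x : Laur K n) : HEq x (castLaur K h x) := by
  subst h
  suffices e : (castLaur K (rfl : n = n)).toAlgHom = AlgHom.id K (Laur K n) from
    heq_of_eq (DFunLike.congr_fun e x).symm
  exact Laur.algHom_ext K fun v => by simp [castLaur_mono]

theorem castLaur_embL_embL (r s t : ℕ) (P : Laur K r) :
    castLaur K (Nat.add_assoc r s t) (embL K (r + s) t (embL K r s P)) = embL K r (s + t) P := by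
  suffices e : ((castLaur K (Nat.add_assoc r s t)).toAlgHom.comp (embL K (r + s) t)).comp
      (embL K r s) = embL K r (s + t) from DFunLike.congr_fun e P
  refine Laur.algHom_ext K fun v => ?_
  simp only [AlgHom.comp_apply, AlgEquiv.coe_toAlgHom, embL_mono, castLaur_mono]
  congr 1
  funext k
  simp only [extL, Function.comp_apply, AddMonoidHom.coe_mk, ZeroHom.coe_mk, Fin.val_cast]
  split_ifs <;> first | rfl | omega

theorem castLaur_embL_embR (r s t : ℕ) (Q : Laur K s) :
    castLaur K (Nat.add_assoc r s t) (embL K (r + s) t (embR K r s Q))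
      = embR K r (s + t) (embL K s t Q) := by
  suffices e : ((castLaur K (Nat.add_assoc r s t)).toAlgHom.comp (embL K (r + s) t)).comp
      (embR K r s) = (embR K r (s + t)).comp (embL K s t) from DFunLike.congr_fun e Q
  refine Laur.algHom_ext K fun v => ?_
  simp only [AlgHom.comp_apply, AlgEquiv.coe_toAlgHom, embL_mono, embR_mono, castLaur_mono]
  congr 1
  funext k
  simp only [extL, extR, Function.comp_apply, AddMonoidHom.coe_mk, ZeroHom.coe_mk, Fin.val_cast]
  split_ifs <;> first | rfl | omega

theorem castLaur_embR (r s t : ℕ) (R : Laur K t) :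
    castLaur K (Nat.add_assoc r s t) (embR K (r + s) t R) = embR K r (s + t) (embR K s t R) := by
  suffices e : (castLaur K (Nat.add_assoc r s t)).toAlgHom.comp (embR K (r + s) t)
      = (embR K r (s + t)).comp (embR K s t) from DFunLike.congr_fun e R
  refine Laur.algHom_ext K fun v => ?_
  simp only [AlgHom.comp_apply, AlgEquiv.coe_toAlgHom, embR_mono, castLaur_mono]
  congr 1
  funext k
  simp only [extR, Function.comp_apply, AddMonoidHom.coe_mk, ZeroHom.coe_mk, Fin.val_cast]
  split_ifs <;> first | rfl | omega | exact congrArg v (Fin.ext (by simp; omega))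

theorem castLaur_embL_mul_embR_assoc (r s t : ℕ) (P : Laur K r) (Q : Laur K s) (R : Laur K t) :
    castLaur K (Nat.add_assoc r s t)
        (embL K (r + s) t (embL K r s P * embR K r s Q) * embR K (r + s) t R)
      = embL K r (s + t) P * embR K r (s + t) (embL K s t Q * embR K s t R) := by
  rw [map_mul, map_mul, map_mul, castLaur_embL_embL, castLaur_embL_embR, castLaur_embR, map_mul,
    mul_assoc]

theorem psiEl_heq {σ σb : K} {n m : ℕ} (h : n = m) {x : Laur K n} {y : Laur K m}
    (hxy : HEq x y) : HEq (psiEl K σ σb n x) (psiEl K σ σb m y) := by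
  subst h
  rw [eq_of_heq hxy]

end Associativity

theorem shuffle_algebra_structure_general (K : Type) [Field K] (σ σb : K) :
    (∀ r s : ℕ, ∃! m : Amod K σ σb r ⊗[K] Amod K σ σb s →ₗ[K] Amod K σ σb (r + s),
        MulProp K σ σb r s m) ∧
    (∀ m : ∀ r s : ℕ, Amod K σ σb r ⊗[K] Amod K σ σb s →ₗ[K] Amod K σ σb (r + s),
      (∀ r s, MulProp K σ σb r s (m r s)) →
      ∀ (r s t : ℕ) (P : Laur K r) (Q : Laur K s) (R : Laur K t),
        HEq (m (r + s) t
              ((m r s (psiEl K σ σb r P ⊗ₜ[K] psiEl K σ σb s Q)) ⊗ₜ[K] psiEl K σ σb t R))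
            (m r (s + t)
              (psiEl K σ σb r P ⊗ₜ[K]
                (m s t (psiEl K σ σb s Q ⊗ₜ[K] psiEl K σ σb t R))))) := by
  refine ⟨existsUnique_mulProp K σ σb, fun m hm r s t P Q R => ?_⟩
  rw [hm r s P Q, hm (r + s) t _ R, hm s t Q R, hm r (s + t) P _]
  exact psiEl_heq K (Nat.add_assoc r s t) ((heq_castLaur K _ _).trans
    (heq_of_eq (castLaur_embL_mul_embR_assoc K r s t P Q R)))

/-- There exists a unique `K`-linear map `m_{r,s} : A_r ⊗ A_s → A_{r+s}` with
`m_{r,s}(Ψ_r(P) ⊗ Ψ_s(Q)) = Ψ_{r+s}(P·Q(z_{r+1},…))`, and any family of such maps is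
associative, i.e. endows `A = K ⊕ ⊕_{r≥1} A_r` with the structure of an associative
graded algebra.  (Associativity is stated via `HEq` because of the grading
`(r+s)+t = r+(s+t)`.) -/
theorem shuffle_algebra_structure (K : Type) [Field K] (σ σb : K)
    (hσ : σ ≠ 0) (hσb : σb ≠ 0) :
    (∀ r s : ℕ, ∃! m : Amod K σ σb r ⊗[K] Amod K σ σb s →ₗ[K] Amod K σ σb (r + s),
        MulProp K σ σb r s m) ∧
    (∀ m : ∀ r s : ℕ, Amod K σ σb r ⊗[K] Amod K σ σb s →ₗ[K] Amod K σ σb (r + s),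
      (∀ r s, MulProp K σ σb r s (m r s)) →
      ∀ (r s t : ℕ) (P : Laur K r) (Q : Laur K s) (R : Laur K t),
        HEq (m (r + s) t
              ((m r s (psiEl K σ σb r P ⊗ₜ[K] psiEl K σ σb s Q)) ⊗ₜ[K] psiEl K σ σb t R))
            (m r (s + t)
              (psiEl K σ σb r P ⊗ₜ[K]
                (m s t (psiEl K σ σb s Q ⊗ₜ[K] psiEl K σ σb t R))))) :=
  shuffle_algebra_structure_general K σ σb
end

section
/- With area a(p) = Σ_{i<j : μ(x_i) > μ(x_j)} det(x_i, x_j) as above, let p have a nonconvex adjacent pair (x_i, x_{i+1}) with μ(x_i) > μ(x_{i+1}), and let p' be obtained from p by replacing (x_i, x_{i+1}) with any convex path (y_1,...,y_k) of total weight x_i + x_{i+1} all of whose segments y_t lie in the closed triangle spanned by x_{i+1} and x_i (i.e., each y_t = α x_i + β x_{i+1} with the slopes satisfying μ(x_{i+1}) ≤ μ(y_t) ≤ μ(x_i)). Then a(p') < a(p). -/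
/-- Membership in the half-plane `{(a,b) : a > 0, or a = 0 and b > 0}`. -/
def inH (x : ℤ × ℤ) : Prop := 0 < x.1 ∨ (x.1 = 0 ∧ 0 < x.2)

/-- The area `a(p) = Σ_{i<j : μ(xᵢ) > μ(xⱼ)} det(xⱼ,xᵢ)` of the path
`(p s, …, p (t-1))`. -/
def areaSum (p : ℕ → ℤ × ℤ) (s t : ℕ) : ℤ :=
  ∑ i ∈ Finset.Ico s t, ∑ j ∈ Finset.Ico s t,
    if i < j ∧ detZ (p i) (p j) < 0 then detZ (p j) (p i) else 0

/-!
Write `a = p i`, `b = p (i + 1)` and `D = det(b, a) > 0`. The area is additive over a splitting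
of the path into blocks, up to the inversions between blocks. The convex block `y` has no
inversions (slopes in the half-plane are totally ordered by `det`), while the pair `(a, b)` is
one inversion of weight `D`. Every `y t` lies in the cone spanned by `a` and `b`, and the
`y t` add up to `a + b`; since the weight `max (det(v, z)) 0` of an inversion is sublinear in
each argument, the inversions of the `y t` with any vector `z` outside the block weigh at most
those of `a` and `b`.
-/

lemma detZ_self (u : ℤ × ℤ) : detZ u u = 0 := by
  unfold detZ; ring

lemma detZ_anticomm (u v : ℤ × ℤ) : detZ v u = -detZ u v := by
  unfold detZ; ring

lemma detZ_smul_eq_add (a b y : ℤ × ℤ) : detZ b a • y = detZ b y • a + detZ y a • b := by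
  ext <;> simp only [detZ, Prod.smul_fst, Prod.smul_snd, Prod.fst_add, Prod.snd_add, smul_eq_mul]
    <;> ring

def detZLeft (z : ℤ × ℤ) : ℤ × ℤ →+ ℤ :=
  AddMonoidHom.mk' (detZ · z) fun u v => by simp only [detZ, Prod.fst_add, Prod.snd_add]; ring

def detZRight (z : ℤ × ℤ) : ℤ × ℤ →+ ℤ :=
  AddMonoidHom.mk' (detZ z ·) fun u v => by simp only [detZ, Prod.fst_add, Prod.snd_add]; ring

lemma detZ_nonneg_trans {a b c : ℤ × ℤ} (ha : inH a) (hb : inH b) (hc : inH c)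
    (hab : 0 ≤ detZ a b) (hbc : 0 ≤ detZ b c) : 0 ≤ detZ a c := by
  have ha₁ : 0 ≤ a.1 := by rcases ha with h | ⟨h, _⟩ <;> omega
  have hc₁ : 0 ≤ c.1 := by rcases hc with h | ⟨h, _⟩ <;> omega
  rcases hb with hb₁ | ⟨hb₁, hb₂⟩
  · have key : b.1 * detZ a c = a.1 * detZ b c + c.1 * detZ a b := by unfold detZ; ring
    nlinarith [mul_nonneg ha₁ hbc, mul_nonneg hc₁ hab]
  · have hc₁' : c.1 = 0 := by
      simp only [detZ, hb₁, zero_mul, zero_sub, Left.nonneg_neg_iff] at hbc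
      nlinarith
    have hc₂ : 0 < c.2 := by rcases hc with h | ⟨-, h⟩ <;> omega
    simp only [detZ, hc₁', mul_zero, sub_zero]
    positivity

lemma detZ_nonneg_of_le {k : ℕ} {y : ℕ → ℤ × ℤ} (hH : ∀ t < k, inH (y t))
    (hstep : ∀ t, t + 1 < k → 0 ≤ detZ (y t) (y (t + 1))) {s t : ℕ} (hst : s ≤ t) (ht : t < k) :
    0 ≤ detZ (y s) (y t) := by
  induction t, hst using Nat.le_induction with
  | base => rw [detZ_self]
  | succ t hst ih =>
    exact detZ_nonneg_trans (hH s (by omega)) (hH t (by omega)) (hH (t + 1) ht)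
      (ih (by omega)) (hstep t ht)

/-- By Cramer's rule each `y ∈ Y` is `(detZ b y • a + detZ y a • b) / detZ b a`, with coefficients
summing over `Y` to `1`; the bound is the sublinearity of `v ↦ max (ℓ v) 0`. -/
lemma sum_map_max_le_of_mem_cone {a b : ℤ × ℤ} (hab : 0 < detZ b a) {Y : List (ℤ × ℤ)}
    (hY : ∀ y ∈ Y, 0 ≤ detZ b y ∧ 0 ≤ detZ y a) (hsum : Y.sum = a + b) (ℓ : ℤ × ℤ →+ ℤ) :
    (Y.map fun y => max (ℓ y) 0).sum ≤ max (ℓ a) 0 + max (ℓ b) 0 := by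
  have hpoint : ∀ y ∈ Y,
      detZ b a * max (ℓ y) 0 ≤ detZ b y * max (ℓ a) 0 + detZ y a * max (ℓ b) 0 := by
    intro y hy
    obtain ⟨hby, hya⟩ := hY y hy
    calc detZ b a * max (ℓ y) 0 = max (detZ b y * ℓ a + detZ y a * ℓ b) 0 := by
          rw [mul_max_of_nonneg _ _ hab.le, mul_zero, ← smul_eq_mul, ← map_zsmul, detZ_smul_eq_add,
            map_add, map_zsmul, map_zsmul, smul_eq_mul, smul_eq_mul]
      _ ≤ detZ b y * max (ℓ a) 0 + detZ y a * max (ℓ b) 0 :=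
          max_le (add_le_add (mul_le_mul_of_nonneg_left (le_max_left _ _) hby)
              (mul_le_mul_of_nonneg_left (le_max_left _ _) hya))
            (add_nonneg (mul_nonneg hby (le_max_right _ _)) (mul_nonneg hya (le_max_right _ _)))
  have hcoef_b : (Y.map (detZ b ·)).sum = detZ b a := by
    have := map_list_sum (detZRight b) Y
    simp only [detZRight, AddMonoidHom.mk'_apply, hsum] at this
    rw [← this]; unfold detZ; simp only [Prod.fst_add, Prod.snd_add]; ring
  have hcoef_a : (Y.map (detZ · a)).sum = detZ b a := by
    have := map_list_sum (detZLeft a) Y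
    simp only [detZLeft, AddMonoidHom.mk'_apply, hsum] at this
    rw [← this]; unfold detZ; simp only [Prod.fst_add, Prod.snd_add]; ring
  refine le_of_mul_le_mul_left ?_ hab
  calc detZ b a * (Y.map fun y => max (ℓ y) 0).sum
      = (Y.map fun y => detZ b a * max (ℓ y) 0).sum := (List.sum_map_mul_left _ _ _).symm
    _ ≤ (Y.map fun y => detZ b y * max (ℓ a) 0 + detZ y a * max (ℓ b) 0).sum :=
        List.sum_le_sum hpoint
    _ = detZ b a * (max (ℓ a) 0 + max (ℓ b) 0) := by
        rw [List.sum_map_add, List.sum_map_mul_right, List.sum_map_mul_right, hcoef_b, hcoef_a,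
          mul_add]

def inversionArea (u v : ℤ × ℤ) : ℤ := max (detZ v u) 0

def pathArea : List (ℤ × ℤ) → ℤ
  | [] => 0
  | u :: L => (L.map (inversionArea u)).sum + pathArea L

def crossArea (L M : List (ℤ × ℤ)) : ℤ := (L.map fun u => (M.map (inversionArea u)).sum).sum

lemma pathArea_append (L M : List (ℤ × ℤ)) :
    pathArea (L ++ M) = pathArea L + pathArea M + crossArea L M := by
  induction L with
  | nil => simp [pathArea, crossArea]
  | cons u L ih =>
    simp only [List.cons_append, pathArea, ih, crossArea, List.map_append, List.sum_append,
      List.map_cons, List.sum_cons]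
    ring

lemma crossArea_append_left (L M N : List (ℤ × ℤ)) :
    crossArea (L ++ M) N = crossArea L N + crossArea M N := by
  simp [crossArea]

lemma crossArea_eq_sum_map_right (L M : List (ℤ × ℤ)) :
    crossArea L M = (M.map fun v => (L.map (inversionArea · v)).sum).sum := by
  simpa [crossArea] using Multiset.sum_map_sum_map (L : Multiset _) (M : Multiset _)
    (f := inversionArea)

lemma pathArea_eq_zero_of_pairwise {L : List (ℤ × ℤ)} (hL : L.Pairwise (0 ≤ detZ · ·)) :
    pathArea L = 0 := by
  induction L with
  | nil => rfl
  | cons u L ih =>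
    rw [List.pairwise_cons] at hL
    rw [pathArea, ih hL.2, add_zero]
    refine List.sum_eq_zero fun x hx => ?_
    obtain ⟨v, hv, rfl⟩ := List.mem_map.1 hx
    rw [inversionArea, detZ_anticomm, max_eq_right (neg_nonpos.2 (hL.1 v hv))]

lemma ite_detZ_neg_eq_inversionArea (u v : ℤ × ℤ) :
    (if detZ u v < 0 then detZ v u else 0) = inversionArea u v := by
  rw [inversionArea, detZ_anticomm v u]
  split_ifs <;> omega

lemma areaSum_zero_eq_pathArea (p : ℕ → ℤ × ℤ) (n : ℕ) :
    areaSum p 0 n = pathArea ((List.range n).map p) := by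
  induction n with
  | zero => rfl
  | succ n ih =>
    have hcross : crossArea ((List.range n).map p) [p n] =
        ∑ m ∈ Finset.range n, inversionArea (p m) (p n) := by
      simp [crossArea, Finset.sum_eq_multiset_sum, Finset.range_val, Multiset.range, Function.comp_def]
    rw [List.range_succ, List.map_append, List.map_singleton, pathArea_append, ← ih, hcross]
    simp only [areaSum, ← Finset.range_eq_Ico, Finset.sum_range_succ, Finset.sum_add_distrib]
    have hnew : ∀ m ∈ Finset.range n, (if m < n ∧ detZ (p m) (p n) < 0 then
        detZ (p n) (p m) else 0) = inversionArea (p m) (p n) := fun m hm => by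
      rw [← ite_detZ_neg_eq_inversionArea, if_congr (and_iff_right (Finset.mem_range.1 hm)) rfl rfl]
    have hold : ∀ m ∈ Finset.range n, (if n < m ∧ detZ (p n) (p m) < 0 then
        detZ (p m) (p n) else 0) = 0 := fun m hm =>
      if_neg fun h => by have := Finset.mem_range.1 hm; omega
    simp [Finset.sum_congr rfl hnew, Finset.sum_eq_zero hold, pathArea]

lemma crossArea_le_of_mem_cone_right {a b : ℤ × ℤ} (hab : 0 < detZ b a) {Y : List (ℤ × ℤ)}
    (hY : ∀ y ∈ Y, 0 ≤ detZ b y ∧ 0 ≤ detZ y a) (hsum : Y.sum = a + b) (L : List (ℤ × ℤ)) :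
    crossArea L Y ≤ crossArea L [a, b] := by
  refine List.sum_le_sum fun u _ => ?_
  simp only [List.map_cons, List.map_nil, List.sum_cons, List.sum_nil, add_zero]
  exact sum_map_max_le_of_mem_cone hab hY hsum (detZLeft u)

lemma crossArea_le_of_mem_cone_left {a b : ℤ × ℤ} (hab : 0 < detZ b a) {Y : List (ℤ × ℤ)}
    (hY : ∀ y ∈ Y, 0 ≤ detZ b y ∧ 0 ≤ detZ y a) (hsum : Y.sum = a + b) (L : List (ℤ × ℤ)) :
    crossArea Y L ≤ crossArea [a, b] L := by
  rw [crossArea_eq_sum_map_right, crossArea_eq_sum_map_right]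
  refine List.sum_le_sum fun v _ => ?_
  simp only [List.map_cons, List.map_nil, List.sum_cons, List.sum_nil, add_zero]
  exact sum_map_max_le_of_mem_cone hab hY hsum (detZRight v)

lemma map_range_splice {α : Type*} (p y : ℕ → α) (i k m : ℕ) :
    (List.range (i + k + m)).map (fun j => if j < i then p j else if j < i + k then y (j - i)
      else p (j - k + 2)) =
      (List.range i).map p ++ (List.range k).map y ++ (List.range m).map (p <| i + 2 + ·) := by
  simp only [List.range_add, List.map_append, List.map_map]
  refine congrArg₂ (· ++ ·) (congrArg₂ (· ++ ·) ?_ ?_) ?_ <;>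
    refine List.map_congr_left fun j hj => ?_ <;> rw [List.mem_range] at hj
  · simp [hj]
  · simp [hj]
  · rw [Function.comp_apply, if_neg (by omega), if_neg (by omega)]; congr 1; omega

lemma map_range_add_two {α : Type*} (p : ℕ → α) (i m : ℕ) :
    (List.range (i + 2 + m)).map p =
      (List.range i).map p ++ [p i, p (i + 1)] ++ (List.range m).map (p <| i + 2 + ·) := by
  simp [List.range_add, List.range_succ, Function.comp_def]

theorem area_local_convexification_lt_general (n i k : ℕ) (p y : ℕ → ℤ × ℤ)
    (hi : i + 1 < n)
    (hnonconv : detZ (p i) (p (i + 1)) < 0)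
    (hHy : ∀ t < k, inH (y t))
    (hconv : ∀ t, t + 1 < k → 0 ≤ detZ (y t) (y (t + 1)))
    (hsum : ∑ t ∈ Finset.range k, y t = p i + p (i + 1))
    (htri : ∀ t < k, 0 ≤ detZ (p (i + 1)) (y t) ∧ 0 ≤ detZ (y t) (p i)) :
    areaSum (fun j => if j < i then p j else if j < i + k then y (j - i)
      else p (j - k + 2)) 0 (n + k - 2) < areaSum p 0 n := by
  obtain ⟨m, rfl⟩ : ∃ m, n = i + 2 + m := ⟨n - i - 2, by omega⟩
  set Y := (List.range k).map y
  have hD : 0 < detZ (p (i + 1)) (p i) := by rw [detZ_anticomm]; omega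
  have hY : ∀ u ∈ Y, 0 ≤ detZ (p (i + 1)) u ∧ 0 ≤ detZ u (p i) := by
    simpa [Y] using htri
  have hYsum : Y.sum = p i + p (i + 1) := by
    simpa [Y, Finset.sum_eq_multiset_sum, Finset.range_val, Multiset.range] using hsum
  have hYconvex : pathArea Y = 0 := by
    refine pathArea_eq_zero_of_pairwise (List.pairwise_map.2 ?_)
    refine List.pairwise_lt_range.imp_of_mem fun hs ht hst => ?_
    exact detZ_nonneg_of_le hHy hconv hst.le (List.mem_range.1 ht)
  rw [show i + 2 + m + k - 2 = i + k + m by omega, areaSum_zero_eq_pathArea,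
    areaSum_zero_eq_pathArea, map_range_splice, map_range_add_two]
  simp only [pathArea_append, crossArea_append_left]
  have hpair : pathArea [p i, p (i + 1)] = detZ (p (i + 1)) (p i) := by
    simp [pathArea, inversionArea, hD.le]
  linarith [crossArea_le_of_mem_cone_right hD hY hYsum ((List.range i).map p),
    crossArea_le_of_mem_cone_left hD hY hYsum ((List.range m).map (p <| i + 2 + ·))]

/-- A local convexification strictly decreases the area: if `(p i, p (i+1))` is a
nonconvex adjacent pair (`μ(p i) > μ(p (i+1))`, i.e. `detZ (p i) (p (i+1)) < 0`) and it
is replaced by a convex path `(y₀,…,y_{k-1})` of the same total weight whose segments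
all lie (in slope) in the closed triangle spanned by `p (i+1)` and `p i`, then the
resulting path `q` of length `n + k - 2` has `a(q) < a(p)`. -/
theorem area_local_convexification_lt (n i k : ℕ) (p y : ℕ → ℤ × ℤ)
    (hH : ∀ m < n, inH (p m)) (hi : i + 1 < n)
    (hnonconv : detZ (p i) (p (i + 1)) < 0)
    (hk : 1 ≤ k) (hHy : ∀ t < k, inH (y t))
    (hconv : ∀ t, t + 1 < k → 0 ≤ detZ (y t) (y (t + 1)))
    (hsum : ∑ t ∈ Finset.range k, y t = p i + p (i + 1))
    (htri : ∀ t < k, 0 ≤ detZ (p (i + 1)) (y t) ∧ 0 ≤ detZ (y t) (p i)) :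
    areaSum (fun j => if j < i then p j else if j < i + k then y (j - i)
      else p (j - k + 2)) 0 (n + k - 2) < areaSum p 0 n :=
  area_local_convexification_lt_general n i k p y hi hnonconv hHy hconv hsum htri
end

section
/- In the free associative K-algebra generated by symbols u_{0,l} (l ≠ 0), u_{1,n}, u_{-1,n} (n in Z), modulo the relations [u_{0,l}, u_{1,n}] = sgn(l)·u_{1,n+l}, [u_{0,l}, u_{-1,n}] = -sgn(l)·u_{-1,n+l}, [u_{0,l}, u_{0,k}] = 0, and [u_{1,n}, u_{-1,m}] ∈ span of monomials in the u_{0,l}, every element is a K-linear combination of monomials of the form (product of u_{1,*})·(product of u_{0,*})·(product of u_{-1,*}); i.e., the multiplication map from (subalgebra generated by u_{1,*}) ⊗ (subalgebra generated by u_{0,*}) ⊗ (subalgebra generated by u_{-1,*}) to the whole algebra is surjective. -/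
/-! Let `P`, `Z`, `N` be the subalgebras generated by the `u_{1,n}`, the `u_{0,l}` and the
`u_{-1,n}`. Commuting a generator of `Z` past an element of `P` (resp. `N`) only produces
elements of `P` (resp. `N`), so `Z * P ≤ P * Z` and `N * Z ≤ Z * N`; commuting an element of
`N` past a `u_{1,n}` produces an element of `Z * N`, so `N * P ≤ P * Z * N`. These three
straightening rules make `P * Z * N` closed under multiplication, hence a subalgebra
containing all generators. -/

namespace Subalgebra

open Submodule Algebra

variable {K A : Type*} [CommRing K] [Ring A] [Algebra K A]

theorem one_le_toSubmodule (S : Subalgebra K A) : 1 ≤ S.toSubmodule :=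
  Submodule.one_le.2 S.one_mem

theorem adjoin_toSubmodule_mul_le {t : Set A} {W : Submodule K A}
    (h : ∀ z ∈ t, ∀ w ∈ W, z * w ∈ W) : (adjoin K t).toSubmodule * W ≤ W := by
  refine Submodule.mul_le.2 fun z hz => ?_
  induction hz using adjoin_induction with
  | mem z hz => exact h z hz
  | algebraMap r => exact fun w hw => by rw [← Algebra.smul_def]; exact W.smul_mem r hw
  | add x y _ _ hx hy => exact fun w hw => by rw [add_mul]; exact add_mem (hx w hw) (hy w hw)
  | mul x y _ _ hx hy => exact fun w hw => by rw [mul_assoc]; exact hx _ (hy w hw)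

theorem mul_adjoin_toSubmodule_le {t : Set A} {W : Submodule K A}
    (h : ∀ z ∈ t, ∀ w ∈ W, w * z ∈ W) : W * (adjoin K t).toSubmodule ≤ W := by
  suffices ∀ z ∈ adjoin K t, ∀ w ∈ W, w * z ∈ W from
    Submodule.mul_le.2 fun w hw z hz => this z hz w hw
  intro z hz
  induction hz using adjoin_induction with
  | mem z hz => exact h z hz
  | algebraMap r =>
    exact fun w hw => by rw [← Algebra.commutes, ← Algebra.smul_def]; exact W.smul_mem r hw
  | add x y _ _ hx hy => exact fun w hw => by rw [mul_add]; exact add_mem (hx w hw) (hy w hw)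
  | mul x y _ _ hx hy => exact fun w hw => by rw [← mul_assoc]; exact hy _ (hx w hw)

/-- Commutation with `a` is a derivation, so it maps `adjoin K t` into any
`adjoin K t`-bimodule containing the commutators of `a` with the generators. -/
theorem commutator_mem_of_mem_adjoin {t : Set A} {M : Submodule K A} {a : A}
    (hl : (adjoin K t).toSubmodule * M ≤ M) (hr : M * (adjoin K t).toSubmodule ≤ M)
    (ht : ∀ x ∈ t, a * x - x * a ∈ M) {p : A} (hp : p ∈ adjoin K t) :
    a * p - p * a ∈ M := by
  induction hp using adjoin_induction with
  | mem x hx => exact ht x hx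
  | algebraMap r => rw [Algebra.commutes, sub_self]; exact M.zero_mem
  | add x y _ _ hx hy =>
    rw [show a * (x + y) - (x + y) * a = (a * x - x * a) + (a * y - y * a) by noncomm_ring]
    exact add_mem hx hy
  | mul x y hx' hy' hx hy =>
    rw [show a * (x * y) - x * y * a = (a * x - x * a) * y + x * (a * y - y * a) by noncomm_ring]
    exact add_mem (hr (mul_mem_mul hx hy')) (hl (mul_mem_mul hx' hy))

theorem commutator_mem_adjoin {s : Set A} {a : A} (hs : ∀ x ∈ s, a * x - x * a ∈ adjoin K s)
    {p : A} (hp : p ∈ adjoin K s) : a * p - p * a ∈ adjoin K s :=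
  commutator_mem_of_mem_adjoin (M := (adjoin K s).toSubmodule)
    (isIdempotentElem_toSubmodule _).le (isIdempotentElem_toSubmodule _).le hs hp

theorem adjoin_mul_le_mul_adjoin_of_commutator_mem {t s : Set A}
    (h : ∀ z ∈ t, ∀ x ∈ s, z * x - x * z ∈ adjoin K s) :
    (adjoin K t).toSubmodule * (adjoin K s).toSubmodule ≤
      (adjoin K s).toSubmodule * (adjoin K t).toSubmodule := by
  set Z := (adjoin K t).toSubmodule
  set P := (adjoin K s).toSubmodule
  calc Z * P ≤ Z * (P * Z) := by gcongr; exact le_mul_of_one_le_right' (one_le_toSubmodule _)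
    _ ≤ P * Z := adjoin_toSubmodule_mul_le fun z hz w hw => by
      induction hw using Submodule.mul_induction_on' with
      | mem_mul_mem p hp y hy =>
        rw [show z * (p * y) = (z * p - p * z) * y + p * (z * y) by noncomm_ring]
        exact add_mem (mul_mem_mul (commutator_mem_adjoin (h z hz) hp) hy)
          (mul_mem_mul hp ((adjoin K t).mul_mem (subset_adjoin hz) hy))
      | add x _ y _ hx hy => rw [mul_add]; exact add_mem hx hy

theorem mul_adjoin_le_adjoin_mul_of_commutator_mem {t s : Set A}
    (h : ∀ z ∈ t, ∀ x ∈ s, z * x - x * z ∈ adjoin K s) :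
    (adjoin K s).toSubmodule * (adjoin K t).toSubmodule ≤
      (adjoin K t).toSubmodule * (adjoin K s).toSubmodule := by
  set Z := (adjoin K t).toSubmodule
  set N := (adjoin K s).toSubmodule
  calc N * Z ≤ Z * N * Z := by gcongr; exact le_mul_of_one_le_left' (one_le_toSubmodule _)
    _ ≤ Z * N := mul_adjoin_toSubmodule_le fun z hz w hw => by
      induction hw using Submodule.mul_induction_on' with
      | mem_mul_mem y hy q hq =>
        rw [show y * q * z = y * z * q - y * (z * q - q * z) by noncomm_ring]
        exact sub_mem (mul_mem_mul ((adjoin K t).mul_mem hy (subset_adjoin hz)) hq)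
          (mul_mem_mul hy (commutator_mem_adjoin (h z hz) hq))
      | add x _ y _ hx hy => rw [add_mul]; exact add_mem hx hy

theorem mul_le_mul_mul_of_commutator_mem {s t : Set A} {Z : Subalgebra K A}
    (hZP : Z.toSubmodule * (adjoin K s).toSubmodule ≤ (adjoin K s).toSubmodule * Z.toSubmodule)
    (hNZ : (adjoin K t).toSubmodule * Z.toSubmodule ≤ Z.toSubmodule * (adjoin K t).toSubmodule)
    (h : ∀ x ∈ s, ∀ y ∈ t, x * y - y * x ∈ Z) :
    (adjoin K t).toSubmodule * (adjoin K s).toSubmodule ≤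
      (adjoin K s).toSubmodule * Z.toSubmodule * (adjoin K t).toSubmodule := by
  set P := (adjoin K s).toSubmodule
  set N := (adjoin K t).toSubmodule
  set Z' := Z.toSubmodule
  have hP : P * P = P := isIdempotentElem_toSubmodule _
  have hZ : Z' * Z' = Z' := isIdempotentElem_toSubmodule _
  have hN : N * N = N := isIdempotentElem_toSubmodule _
  have hNZN : N * (Z' * N) ≤ Z' * N := calc
    N * (Z' * N) = N * Z' * N := (mul_assoc _ _ _).symm
    _ ≤ Z' * N * N := by gcongr
    _ = Z' * N := by rw [mul_assoc, hN]
  have hZNN : Z' * N * N ≤ Z' * N := by rw [mul_assoc, hN]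
  have hcomm : ∀ x ∈ s, ∀ q ∈ adjoin K t, x * q - q * x ∈ Z' * N := fun x hx q hq =>
    commutator_mem_of_mem_adjoin hNZN hZNN
      (fun y hy => le_mul_of_one_le_right' (one_le_toSubmodule _) (h x hx y hy)) hq
  have hPZT : P * Z' * (P * Z' * N) ≤ P * Z' * N := calc
    P * Z' * (P * Z' * N) = P * (Z' * P) * Z' * N := by simp only [mul_assoc]
    _ ≤ P * (P * Z') * Z' * N := by gcongr
    _ = P * Z' * N := by rw [← mul_assoc, hP, mul_assoc P, hZ]
  have hPN : P * N ≤ P * Z' * N := by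
    gcongr; exact le_mul_of_one_le_right' (one_le_toSubmodule _)
  have hZN : Z' * N ≤ P * Z' * N := by
    rw [mul_assoc]; exact le_mul_of_one_le_left' (one_le_toSubmodule _)
  calc N * P ≤ P * Z' * N * P := by
        gcongr; exact (le_mul_of_one_le_left' (one_le_toSubmodule _)).trans hPN
    _ ≤ P * Z' * N := mul_adjoin_toSubmodule_le fun x hx w hw => by
      induction hw using Submodule.mul_induction_on' with
      | mem_mul_mem y hy q hq =>
        rw [show y * q * x = y * (x * q - (x * q - q * x)) by noncomm_ring]
        exact hPZT (mul_mem_mul hy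
          (sub_mem (hPN (mul_mem_mul (subset_adjoin hx) hq)) (hZN (hcomm x hx q hq))))
      | add x _ y _ hx hy => rw [add_mul]; exact add_mem hx hy

theorem toSubmodule_mul_mul_eq_top {P Z N : Subalgebra K A}
    (hZP : Z.toSubmodule * P.toSubmodule ≤ P.toSubmodule * Z.toSubmodule)
    (hNZ : N.toSubmodule * Z.toSubmodule ≤ Z.toSubmodule * N.toSubmodule)
    (hNP : N.toSubmodule * P.toSubmodule ≤ P.toSubmodule * Z.toSubmodule * N.toSubmodule)
    (hgen : P ⊔ Z ⊔ N = ⊤) :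
    P.toSubmodule * Z.toSubmodule * N.toSubmodule = ⊤ := by
  set P' := P.toSubmodule
  set Z' := Z.toSubmodule
  set N' := N.toSubmodule
  have hP : ∀ X, P' * (P' * X) = P' * X := fun X => by
    rw [← mul_assoc, (isIdempotentElem_toSubmodule P).eq]
  have hZ : ∀ X, Z' * (Z' * X) = Z' * X := fun X => by
    rw [← mul_assoc, (isIdempotentElem_toSubmodule Z).eq]
  have hN : N' * N' = N' := isIdempotentElem_toSubmodule N
  have hTT : P' * Z' * N' * (P' * Z' * N') ≤ P' * Z' * N' := calc
    _ = P' * Z' * (N' * P') * (Z' * N') := by simp only [mul_assoc]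
    _ ≤ P' * Z' * (P' * Z' * N') * (Z' * N') := by gcongr
    _ = P' * (Z' * P') * Z' * (N' * Z') * N' := by simp only [mul_assoc]
    _ ≤ P' * (P' * Z') * Z' * (Z' * N') * N' := by gcongr
    _ = P' * Z' * N' := by simp only [mul_assoc, hP, hZ, hN]
  have hPT : P' ≤ P' * Z' * N' :=
    (le_mul_of_one_le_right' (one_le_toSubmodule Z)).trans
      (le_mul_of_one_le_right' (one_le_toSubmodule N))
  have hZT : Z' ≤ P' * Z' * N' :=
    (le_mul_of_one_le_left' (one_le_toSubmodule P)).trans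
      (le_mul_of_one_le_right' (one_le_toSubmodule N))
  have hNT : N' ≤ P' * Z' * N' :=
    le_mul_of_one_le_left' (one_le_mul (one_le_toSubmodule P) (one_le_toSubmodule Z))
  let T := (P' * Z' * N').toSubalgebra (hPT P.one_mem) fun _ _ hx hy => hTT (mul_mem_mul hx hy)
  have hle : P ⊔ Z ⊔ N ≤ T := sup_le (sup_le (fun _ hx => hPT hx) fun _ hx => hZT hx)
    fun _ hx => hNT hx
  exact eq_top_iff.2 fun x _ => hle (hgen ▸ Algebra.mem_top : x ∈ P ⊔ Z ⊔ N)

end Subalgebra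

theorem triangular_decomposition_surjective_general (K A : Type*) [Field K] [Ring A]
    [Algebra K A] (u1 u0 um : ℤ → A)
    (hgen : Algebra.adjoin K
      (Set.range u1 ∪ u0 '' {l : ℤ | l ≠ 0} ∪ Set.range um) = ⊤)
    (h01 : ∀ l n : ℤ, l ≠ 0 →
      u0 l * u1 n - u1 n * u0 l = (Int.sign l : ℤ) • u1 (n + l))
    (h0m : ∀ l n : ℤ, l ≠ 0 →
      u0 l * um n - um n * u0 l = -((Int.sign l : ℤ) • um (n + l)))
    (h1m : ∀ n m : ℤ,
      u1 n * um m - um m * u1 n ∈ Algebra.adjoin K (u0 '' {l : ℤ | l ≠ 0})) :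
    Subalgebra.toSubmodule (Algebra.adjoin K (Set.range u1)) *
        Subalgebra.toSubmodule (Algebra.adjoin K (u0 '' {l : ℤ | l ≠ 0})) *
        Subalgebra.toSubmodule (Algebra.adjoin K (Set.range um)) = ⊤ := by
  have hZP := Subalgebra.adjoin_mul_le_mul_adjoin_of_commutator_mem (K := K)
    (t := u0 '' {l : ℤ | l ≠ 0}) (s := Set.range u1) <| by
    rintro _ ⟨l, hl, rfl⟩ _ ⟨n, rfl⟩
    rw [h01 l n hl]
    exact zsmul_mem (Algebra.subset_adjoin (Set.mem_range_self (n + l))) _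
  have hNZ := Subalgebra.mul_adjoin_le_adjoin_mul_of_commutator_mem (K := K)
    (t := u0 '' {l : ℤ | l ≠ 0}) (s := Set.range um) <| by
    rintro _ ⟨l, hl, rfl⟩ _ ⟨n, rfl⟩
    rw [h0m l n hl]
    exact neg_mem (zsmul_mem (Algebra.subset_adjoin (Set.mem_range_self (n + l))) _)
  have hNP := Subalgebra.mul_le_mul_mul_of_commutator_mem hZP hNZ <| by
    rintro _ ⟨n, rfl⟩ _ ⟨m, rfl⟩; exact h1m n m
  refine Subalgebra.toSubmodule_mul_mul_eq_top hZP hNZ hNP ?_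
  rwa [← Algebra.adjoin_union, ← Algebra.adjoin_union]

/-- Triangular decomposition (surjectivity), Lemma 5.1 of the paper, valid for any
`K`-algebra `A` generated by families `u₁ = (u_{1,n})`, `u₀ = (u_{0,l})_{l≠0}`,
`u₋₁ = (u_{-1,n})` subject to the commutation properties
`[u_{0,l}, u_{1,n}] = sgn(l)·u_{1,n+l}`, `[u_{0,l}, u_{-1,n}] = -sgn(l)·u_{-1,n+l}`,
`[u_{0,l}, u_{0,k}] = 0`, and `[u_{1,n}, u_{-1,m}]` lying in the subalgebra generated
by the `u_{0,l}`: the multiplication map from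
`(subalgebra gen. by u₁) ⊗ (subalgebra gen. by u₀) ⊗ (subalgebra gen. by u₋₁)` to `A`
is surjective, i.e. the product of the corresponding `K`-submodules is all of `A`. -/
theorem triangular_decomposition_surjective (K A : Type*) [Field K] [Ring A]
    [Algebra K A] (u1 u0 um : ℤ → A)
    (hgen : Algebra.adjoin K
      (Set.range u1 ∪ u0 '' {l : ℤ | l ≠ 0} ∪ Set.range um) = ⊤)
    (h01 : ∀ l n : ℤ, l ≠ 0 →
      u0 l * u1 n - u1 n * u0 l = (Int.sign l : ℤ) • u1 (n + l))
    (h0m : ∀ l n : ℤ, l ≠ 0 →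
      u0 l * um n - um n * u0 l = -((Int.sign l : ℤ) • um (n + l)))
    (h00 : ∀ l k : ℤ, l ≠ 0 → k ≠ 0 → u0 l * u0 k = u0 k * u0 l)
    (h1m : ∀ n m : ℤ,
      u1 n * um m - um m * u1 n ∈ Algebra.adjoin K (u0 '' {l : ℤ | l ≠ 0})) :
    Subalgebra.toSubmodule (Algebra.adjoin K (Set.range u1)) *
        Subalgebra.toSubmodule (Algebra.adjoin K (u0 '' {l : ℤ | l ≠ 0})) *
        Subalgebra.toSubmodule (Algebra.adjoin K (Set.range um)) = ⊤ :=
  triangular_decomposition_surjective_general K A u1 u0 um hgen h01 h0m h1m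
end
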